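/- The inner product term satisfies ⟨G, G_k⟩_{H₂,ω} = trace(Bᵀ(Y_{12,ω} + Z_{12,ω})B_k) = trace(Bᵀ Q_{12,ω} B_k), where Y_{12,ω} = (1/2π)∫_{-ω}^{ω}(jνI-A)^{-*}CᵀC_k(jνI-A_k)^{-1}dν and Z_{12,ω} is the analogous double-integral cross term involving the M_i matrices. -/
import Mathlib


open Matrix

variable {ι ι' κ ρ : Type*} [Fintype ι] [DecidableEq ι] [Fintype ι'] [DecidableEq ι']
  [Fintype κ] [DecidableEq κ] [Fintype ρ] [DecidableEq ρ]

/-- The resolvent `(jνI - A)⁻¹`. -/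
noncomputable def resolvMat (A : Matrix ι ι ℂ) (ν : ℝ) : Matrix ι ι ℂ :=
  ((Complex.I * (ν : ℂ)) • (1 : Matrix ι ι ℂ) - A)⁻¹

/-- `Y₁₂ω = (1/2π) ∫ (jνI-A)⁻ᴴ Cᵀ C_k (jνI-A_k)⁻¹ dν`. -/
noncomputable def Y12fl (A : Matrix ι ι ℂ) (Ak : Matrix ι' ι' ℂ)
    (C : Matrix ρ ι ℂ) (Ck : Matrix ρ ι' ℂ) (ω : ℝ) : Matrix ι ι' ℂ :=
  Matrix.of fun i j => (1 / (2 * (Real.pi : ℂ))) *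
    ∫ ν in (-ω)..ω, ((resolvMat A ν)ᴴ * Cᵀ * Ck * resolvMat Ak ν) i j

/-- `Z₁₂ω`, the double-integral cross term involving the `Mᵢ` matrices. -/
noncomputable def Z12fl {p : ℕ} (A : Matrix ι ι ℂ) (Ak : Matrix ι' ι' ℂ)
    (B : Matrix ι κ ℂ) (Bk : Matrix ι' κ ℂ)
    (M : Fin p → Matrix ι ι ℂ) (Mk : Fin p → Matrix ι' ι' ℂ) (ω : ℝ) : Matrix ι ι' ℂ :=
  Matrix.of fun i j => (1 / (2 * (Real.pi : ℂ)))^2 *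
    ∫ ν₁ in (-ω)..ω,
      ((resolvMat A ν₁)ᴴ *
        (∑ l, M l *
          (Matrix.of fun a b =>
            ∫ ν₂ in (-ω)..ω, (resolvMat A ν₂ * B * Bkᵀ * (resolvMat Ak ν₂)ᴴ) a b :
              Matrix ι ι' ℂ) * Mk l) * resolvMat Ak ν₁) i j

/-- The frequency-limited H₂ inner product of two LQO systems, defined via the
frequency-domain integrals of their transfer functions. -/
noncomputable def H2flInner {p : ℕ} (A : Matrix ι ι ℂ) (B : Matrix ι κ ℂ)
    (C : Matrix ρ ι ℂ) (M : Fin p → Matrix ι ι ℂ)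
    (Ak : Matrix ι' ι' ℂ) (Bk : Matrix ι' κ ℂ) (Ck : Matrix ρ ι' ℂ)
    (Mk : Fin p → Matrix ι' ι' ℂ) (ω : ℝ) : ℂ :=
  (Matrix.of fun i j => (1 / (2 * (Real.pi : ℂ))) *
      ∫ ν in (-ω)..ω,
        ((C * resolvMat A ν * B)ᴴ * (Ck * resolvMat Ak ν * Bk)) i j : Matrix κ κ ℂ).trace
  + (Matrix.of fun i j => (1 / (2 * (Real.pi : ℂ)))^2 *
      ∫ ν₁ in (-ω)..ω, ∫ ν₂ in (-ω)..ω,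
        (∑ l, (Bᵀ * (resolvMat A ν₁)ᴴ * M l * resolvMat A ν₂ * B)ᴴ
          * (Bkᵀ * (resolvMat Ak ν₁)ᴴ * Mk l * resolvMat Ak ν₂ * Bk)) i j :
        Matrix κ κ ℂ).trace

open MeasureTheory

private lemma conj_helper2 {α β : Type*} (X : Matrix α β ℝ) :
    (X.map Complex.ofReal)ᴴ = (X.map Complex.ofReal)ᵀ := by
  ext i j
  simp [Complex.conj_ofReal]

private lemma conj_helper1 {α β : Type*} (X : Matrix α β ℝ) :
    ((X.map Complex.ofReal)ᵀ)ᴴ = X.map Complex.ofReal := by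
  ext i j
  simp [Complex.conj_ofReal]

private lemma det_resolv_isUnit {A : Matrix ι ι ℂ} (hA : ∀ μ ∈ spectrum ℂ A, μ.re < 0) (ν : ℝ) :
    IsUnit ((Complex.I * (ν : ℂ)) • (1 : Matrix ι ι ℂ) - A).det := by
  by_contra h
  have hmem : (Complex.I * (ν : ℂ)) ∈ spectrum ℂ A := by
    rw [spectrum.mem_iff, Algebra.algebraMap_eq_smul_one]
    rw [Matrix.isUnit_iff_isUnit_det]
    exact h
  have := hA _ hmem
  simp [Complex.mul_re] at this

private lemma continuous_resolv {A : Matrix ι ι ℂ} (hA : ∀ μ ∈ spectrum ℂ A, μ.re < 0) :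
    Continuous fun ν : ℝ => resolvMat A ν := by
  have hM : Continuous fun ν : ℝ => ((Complex.I * (ν : ℂ)) • (1 : Matrix ι ι ℂ) - A) :=
    ((continuous_const.mul Complex.continuous_ofReal).smul continuous_const).sub continuous_const
  have heq : (fun ν : ℝ => resolvMat A ν)
      = fun ν : ℝ => (((Complex.I * (ν : ℂ)) • (1 : Matrix ι ι ℂ) - A).det)⁻¹ •
          ((Complex.I * (ν : ℂ)) • (1 : Matrix ι ι ℂ) - A).adjugate := by
    funext ν
    rw [resolvMat, Matrix.inv_def, Ring.inverse_eq_inv']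
  rw [heq]
  exact (hM.matrix_det.inv₀ fun ν => (det_resolv_isUnit hA ν).ne_zero).smul hM.matrix_adjugate


private lemma intervalIntegrable_sum' {γ : Type*} {a b : ℝ} {s : Finset γ} {f : γ → ℝ → ℂ}
    (h : ∀ i ∈ s, IntervalIntegrable (f i) volume a b) :
    IntervalIntegrable (fun ν => ∑ i ∈ s, f i ν) volume a b := by
  have heq : (∑ i ∈ s, f i) = fun ν => ∑ i ∈ s, f i ν := by
    funext ν; simp
  exact heq ▸ IntervalIntegrable.sum s h

private lemma integral_matrix_mul_const {ι ι' α β : Type*} [Fintype ι] [Fintype ι'] [Fintype α] [Fintype β]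
    {a b : ℝ} {f : ℝ → Matrix ι ι' ℂ}
    (hf : ∀ i j, IntervalIntegrable (fun ν => f ν i j) volume a b)
    (P : Matrix α ι ℂ) (S : Matrix ι' β ℂ) (i : α) (j : β) :
    ∫ ν in a..b, (P * f ν * S) i j
      = (P * (Matrix.of fun i j => ∫ ν in a..b, f ν i j) * S) i j := by
  simp only [Matrix.mul_apply, Matrix.of_apply, Finset.sum_mul, Finset.mul_sum]
  have h1 : ∀ x : ι', (∫ ν in a..b, ∑ y : ι, P i y * f ν y x * S x j)
      = ∑ y : ι, (P i y * ∫ ν in a..b, f ν y x) * S x j := by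
    intro x
    rw [intervalIntegral.integral_finset_sum (fun y _ => ((hf y x).const_mul _).mul_const _)]
    refine Finset.sum_congr rfl fun y _ => ?_
    rw [intervalIntegral.integral_mul_const, intervalIntegral.integral_const_mul]
  calc ∫ ν in a..b, ∑ x : ι', ∑ y : ι, P i y * f ν y x * S x j
      = ∑ x : ι', ∫ ν in a..b, ∑ y : ι, P i y * f ν y x * S x j :=
        intervalIntegral.integral_finset_sum
          (fun x _ => intervalIntegrable_sum' fun y _ => ((hf y x).const_mul _).mul_const _)
    _ = ∑ x : ι', ∑ y : ι, (P i y * ∫ ν in a..b, f ν y x) * S x j :=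
        Finset.sum_congr rfl fun x _ => h1 x

private lemma double_integral_swap {f : ℝ → ℝ → ℂ} (hf : Continuous fun z : ℝ × ℝ => f z.1 z.2)
    {a b : ℝ} (hab : a ≤ b) :
    ∫ x in a..b, ∫ y in a..b, f x y = ∫ y in a..b, ∫ x in a..b, f x y := by
  simp_rw [intervalIntegral.integral_of_le hab]
  have hIcc : IntegrableOn (Function.uncurry f) (Set.Icc a b ×ˢ Set.Icc a b) volume :=
    hf.continuousOn.integrableOn_compact (isCompact_Icc.prod isCompact_Icc)
  exact integral_integral_swap (by
    rw [Measure.prod_restrict]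
    exact hIcc.mono_set (Set.prod_mono Set.Ioc_subset_Icc_self Set.Ioc_subset_Icc_self))

open MeasureTheory

/-- `⟨G, G_k⟩_{H₂,ω} = trace(Bᵀ (Y₁₂ω + Z₁₂ω) B_k) = trace(Bᵀ Q₁₂ω B_k)`,
with `Q₁₂ω = Y₁₂ω + Z₁₂ω`. -/
theorem H2fl_inner_eq_trace
    {n k m q p : ℕ} (A : Matrix (Fin n) (Fin n) ℝ) (B : Matrix (Fin n) (Fin m) ℝ)
    (C : Matrix (Fin q) (Fin n) ℝ) (M : Fin p → Matrix (Fin n) (Fin n) ℝ)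
    (Ak : Matrix (Fin k) (Fin k) ℝ) (Bk : Matrix (Fin k) (Fin m) ℝ)
    (Ck : Matrix (Fin q) (Fin k) ℝ) (Mk : Fin p → Matrix (Fin k) (Fin k) ℝ)
    (hA : ∀ μ ∈ spectrum ℂ (A.map Complex.ofReal), μ.re < 0)
    (hAk : ∀ μ ∈ spectrum ℂ (Ak.map Complex.ofReal), μ.re < 0)
    (hM : ∀ l, (M l)ᵀ = M l) (hMk : ∀ l, (Mk l)ᵀ = Mk l)
    (ω : ℝ) (hω : 0 < ω)
    (Q12ω : Matrix (Fin n) (Fin k) ℂ)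
    (hQ12ω : Q12ω =
      Y12fl (A.map Complex.ofReal) (Ak.map Complex.ofReal)
          (C.map Complex.ofReal) (Ck.map Complex.ofReal) ω
        + Z12fl (A.map Complex.ofReal) (Ak.map Complex.ofReal)
            (B.map Complex.ofReal) (Bk.map Complex.ofReal)
            (fun l => (M l).map Complex.ofReal) (fun l => (Mk l).map Complex.ofReal) ω) :
    H2flInner (A.map Complex.ofReal) (B.map Complex.ofReal) (C.map Complex.ofReal)
        (fun l => (M l).map Complex.ofReal)
        (Ak.map Complex.ofReal) (Bk.map Complex.ofReal) (Ck.map Complex.ofReal)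
        (fun l => (Mk l).map Complex.ofReal) ω
      = ((B.map Complex.ofReal)ᵀ * Q12ω * Bk.map Complex.ofReal).trace := by
  have hRc : Continuous fun ν : ℝ => resolvMat (A.map Complex.ofReal) ν := continuous_resolv hA
  have hRkc : Continuous fun ν : ℝ => resolvMat (Ak.map Complex.ofReal) ν := continuous_resolv hAk
  have hab : (-ω : ℝ) ≤ ω := by linarith
  have hMsym : ∀ l, ((M l).map Complex.ofReal)ᵀ = ((M l).map Complex.ofReal) := fun l => by
    rw [← Matrix.transpose_map, hM l]
  have hMksym : ∀ l, ((Mk l).map Complex.ofReal)ᵀ = ((Mk l).map Complex.ofReal) := fun l => by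
    rw [← Matrix.transpose_map, hMk l]
  rw [hQ12ω, Matrix.mul_add, Matrix.add_mul, Matrix.trace_add]
  simp only [H2flInner]
  congr 1
  · -- linear part
    have hfY : ∀ a b, IntervalIntegrable
        (fun ν => ((resolvMat (A.map Complex.ofReal) ν)ᴴ * (C.map Complex.ofReal)ᵀ * (Ck.map Complex.ofReal) * (resolvMat (Ak.map Complex.ofReal) ν)) a b) volume (-ω) ω :=
      fun a b => ((((hRc.matrix_conjTranspose.matrix_mul continuous_const).matrix_mul
        continuous_const).matrix_mul hRkc).matrix_elem a b).intervalIntegrable _ _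
    have hEnt : ∀ ν : ℝ, ((C.map Complex.ofReal) * (resolvMat (A.map Complex.ofReal) ν) * (B.map Complex.ofReal))ᴴ * ((Ck.map Complex.ofReal) * (resolvMat (Ak.map Complex.ofReal) ν) * (Bk.map Complex.ofReal))
        = (B.map Complex.ofReal)ᵀ * ((resolvMat (A.map Complex.ofReal) ν)ᴴ * (C.map Complex.ofReal)ᵀ * (Ck.map Complex.ofReal) * (resolvMat (Ak.map Complex.ofReal) ν)) * (Bk.map Complex.ofReal) := fun ν => by
      simp only [Matrix.conjTranspose_mul, conj_helper2, Matrix.mul_assoc]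
    have hY : Y12fl (A.map Complex.ofReal) (Ak.map Complex.ofReal) (C.map Complex.ofReal)
        (Ck.map Complex.ofReal) ω
        = (1 / (2 * (Real.pi : ℂ))) • Matrix.of (fun a b => ∫ ν in (-ω)..ω,
            ((resolvMat (A.map Complex.ofReal) ν)ᴴ * (C.map Complex.ofReal)ᵀ * (Ck.map Complex.ofReal) * (resolvMat (Ak.map Complex.ofReal) ν)) a b) := by
      ext a b
      simp only [Y12fl, Matrix.smul_apply, Matrix.of_apply, smul_eq_mul]
    congr 1
    ext i j
    simp only [Matrix.of_apply]
    rw [hY, Matrix.mul_smul, Matrix.smul_mul, Matrix.smul_apply, smul_eq_mul]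
    congr 1
    rw [← integral_matrix_mul_const hfY ((B.map Complex.ofReal)ᵀ) (Bk.map Complex.ofReal) i j]
    refine intervalIntegral.integral_congr fun ν _ => ?_
    exact congrFun (congrFun (hEnt ν) i) j
  · -- quadratic part
    have hWc : Continuous fun x : ℝ => ((resolvMat (A.map Complex.ofReal) x) * (B.map Complex.ofReal) * (Bk.map Complex.ofReal)ᵀ * (resolvMat (Ak.map Complex.ofReal) x)ᴴ) :=
      ((hRc.matrix_mul continuous_const).matrix_mul continuous_const).matrix_mul
        hRkc.matrix_conjTranspose
    have hfW : ∀ a b, IntervalIntegrable (fun x => ((resolvMat (A.map Complex.ofReal) x) * (B.map Complex.ofReal) * (Bk.map Complex.ofReal)ᵀ * (resolvMat (Ak.map Complex.ofReal) x)ᴴ) a b) volume (-ω) ω :=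
      fun a b => (hWc.matrix_elem a b).intervalIntegrable _ _
    have hSigc : Continuous fun x : ℝ => (∑ l, ((M l).map Complex.ofReal) * ((resolvMat (A.map Complex.ofReal) x) * (B.map Complex.ofReal) * (Bk.map Complex.ofReal)ᵀ * (resolvMat (Ak.map Complex.ofReal) x)ᴴ) * ((Mk l).map Complex.ofReal)) :=
      continuous_finset_sum _ fun l _ => (continuous_const.matrix_mul hWc).matrix_mul
        continuous_const
    have hfSig : ∀ a b, IntervalIntegrable (fun x => (∑ l, ((M l).map Complex.ofReal) * ((resolvMat (A.map Complex.ofReal) x) * (B.map Complex.ofReal) * (Bk.map Complex.ofReal)ᵀ * (resolvMat (Ak.map Complex.ofReal) x)ᴴ) * ((Mk l).map Complex.ofReal)) a b) volume (-ω) ω :=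
      fun a b => (hSigc.matrix_elem a b).intervalIntegrable _ _
    have hfG : ∀ a b, IntervalIntegrable
        (fun y => ((resolvMat (A.map Complex.ofReal) y)ᴴ * (∑ l, ((M l).map Complex.ofReal) * (Matrix.of fun a b => ∫ x in (-ω)..ω, ((resolvMat (A.map Complex.ofReal) x) * (B.map Complex.ofReal) * (Bk.map Complex.ofReal)ᵀ * (resolvMat (Ak.map Complex.ofReal) x)ᴴ) a b : Matrix (Fin n) (Fin k) ℂ) * ((Mk l).map Complex.ofReal)) * (resolvMat (Ak.map Complex.ofReal) y)) a b) volume (-ω) ω :=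
      fun a b => (((hRc.matrix_conjTranspose.matrix_mul continuous_const).matrix_mul
        hRkc).matrix_elem a b).intervalIntegrable _ _
    have hS : (∑ l, ((M l).map Complex.ofReal) * (Matrix.of fun a b => ∫ x in (-ω)..ω, ((resolvMat (A.map Complex.ofReal) x) * (B.map Complex.ofReal) * (Bk.map Complex.ofReal)ᵀ * (resolvMat (Ak.map Complex.ofReal) x)ᴴ) a b : Matrix (Fin n) (Fin k) ℂ) * ((Mk l).map Complex.ofReal)) = Matrix.of (fun a b => ∫ x in (-ω)..ω, (∑ l, ((M l).map Complex.ofReal) * ((resolvMat (A.map Complex.ofReal) x) * (B.map Complex.ofReal) * (Bk.map Complex.ofReal)ᵀ * (resolvMat (Ak.map Complex.ofReal) x)ᴴ) * ((Mk l).map Complex.ofReal)) a b) := by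
      ext a b
      simp only [Matrix.of_apply, Matrix.sum_apply]
      rw [intervalIntegral.integral_finset_sum (fun l _ =>
        (((continuous_const.matrix_mul hWc).matrix_mul continuous_const).matrix_elem a b
          ).intervalIntegrable (-ω) ω)]
      exact Finset.sum_congr rfl fun l _ =>
        (integral_matrix_mul_const hfW ((M l).map Complex.ofReal) ((Mk l).map Complex.ofReal) a b).symm
    have hF : ∀ x y : ℝ,
        (∑ l, ((B.map Complex.ofReal)ᵀ * (resolvMat (A.map Complex.ofReal) x)ᴴ * ((M l).map Complex.ofReal) * (resolvMat (A.map Complex.ofReal) y) * (B.map Complex.ofReal))ᴴ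
          * ((Bk.map Complex.ofReal)ᵀ * (resolvMat (Ak.map Complex.ofReal) x)ᴴ * ((Mk l).map Complex.ofReal) * (resolvMat (Ak.map Complex.ofReal) y) * (Bk.map Complex.ofReal)))
        = ((B.map Complex.ofReal)ᵀ * (resolvMat (A.map Complex.ofReal) y)ᴴ) * (∑ l, ((M l).map Complex.ofReal) * ((resolvMat (A.map Complex.ofReal) x) * (B.map Complex.ofReal) * (Bk.map Complex.ofReal)ᵀ * (resolvMat (Ak.map Complex.ofReal) x)ᴴ) * ((Mk l).map Complex.ofReal)) * ((resolvMat (Ak.map Complex.ofReal) y) * (Bk.map Complex.ofReal)) := fun x y => by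
      rw [Matrix.mul_sum, Matrix.sum_mul]
      refine Finset.sum_congr rfl fun l _ => ?_
      simp only [Matrix.conjTranspose_mul, Matrix.conjTranspose_conjTranspose,
        conj_helper1, conj_helper2, hMsym, hMksym, Matrix.mul_assoc]
    have hcont : Continuous fun z : ℝ × ℝ =>
        (∑ l, ((B.map Complex.ofReal)ᵀ * (resolvMat (A.map Complex.ofReal) z.1)ᴴ * ((M l).map Complex.ofReal) * (resolvMat (A.map Complex.ofReal) z.2) * (B.map Complex.ofReal))ᴴ
          * ((Bk.map Complex.ofReal)ᵀ * (resolvMat (Ak.map Complex.ofReal) z.1)ᴴ * ((Mk l).map Complex.ofReal) * (resolvMat (Ak.map Complex.ofReal) z.2) * (Bk.map Complex.ofReal))) := by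
      refine continuous_finset_sum _ fun l _ => Continuous.matrix_mul ?_ ?_
      · exact ((((continuous_const.matrix_mul
          ((hRc.comp continuous_fst).matrix_conjTranspose)).matrix_mul
          continuous_const).matrix_mul (hRc.comp continuous_snd)).matrix_mul
          continuous_const).matrix_conjTranspose
      · exact (((continuous_const.matrix_mul
          ((hRkc.comp continuous_fst).matrix_conjTranspose)).matrix_mul
          continuous_const).matrix_mul (hRkc.comp continuous_snd)).matrix_mul
          continuous_const
    have hZ : Z12fl (A.map Complex.ofReal) (Ak.map Complex.ofReal) (B.map Complex.ofReal)
        (Bk.map Complex.ofReal) (fun l => (M l).map Complex.ofReal)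
        (fun l => (Mk l).map Complex.ofReal) ω
        = ((1 / (2 * (Real.pi : ℂ)))^2) • Matrix.of (fun a b => ∫ ν₁ in (-ω)..ω,
            ((resolvMat (A.map Complex.ofReal) ν₁)ᴴ * (∑ l, ((M l).map Complex.ofReal) * (Matrix.of fun a b => ∫ x in (-ω)..ω, ((resolvMat (A.map Complex.ofReal) x) * (B.map Complex.ofReal) * (Bk.map Complex.ofReal)ᵀ * (resolvMat (Ak.map Complex.ofReal) x)ᴴ) a b : Matrix (Fin n) (Fin k) ℂ) * ((Mk l).map Complex.ofReal)) * (resolvMat (Ak.map Complex.ofReal) ν₁)) a b) := by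
      ext a b
      simp only [Z12fl, Matrix.smul_apply, Matrix.of_apply, smul_eq_mul]
    congr 1
    ext i j
    simp only [Matrix.of_apply]
    rw [hZ, Matrix.mul_smul, Matrix.smul_mul, Matrix.smul_apply, smul_eq_mul]
    congr 1
    rw [← integral_matrix_mul_const hfG ((B.map Complex.ofReal)ᵀ) (Bk.map Complex.ofReal) i j]
    have hswap : (∫ ν₁ in (-ω)..ω, ∫ ν₂ in (-ω)..ω,
        (∑ l, ((B.map Complex.ofReal)ᵀ * (resolvMat (A.map Complex.ofReal) ν₁)ᴴ * ((M l).map Complex.ofReal) * (resolvMat (A.map Complex.ofReal) ν₂) * (B.map Complex.ofReal))ᴴ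
          * ((Bk.map Complex.ofReal)ᵀ * (resolvMat (Ak.map Complex.ofReal) ν₁)ᴴ * ((Mk l).map Complex.ofReal) * (resolvMat (Ak.map Complex.ofReal) ν₂) * (Bk.map Complex.ofReal))) i j)
        = ∫ ν₂ in (-ω)..ω, ∫ ν₁ in (-ω)..ω,
        (∑ l, ((B.map Complex.ofReal)ᵀ * (resolvMat (A.map Complex.ofReal) ν₁)ᴴ * ((M l).map Complex.ofReal) * (resolvMat (A.map Complex.ofReal) ν₂) * (B.map Complex.ofReal))ᴴ
          * ((Bk.map Complex.ofReal)ᵀ * (resolvMat (Ak.map Complex.ofReal) ν₁)ᴴ * ((Mk l).map Complex.ofReal) * (resolvMat (Ak.map Complex.ofReal) ν₂) * (Bk.map Complex.ofReal))) i j :=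
      double_integral_swap (hcont.matrix_elem i j) hab
    rw [hswap]
    refine intervalIntegral.integral_congr fun y _ => ?_
    have e3 : ((B.map Complex.ofReal)ᵀ * ((resolvMat (A.map Complex.ofReal) y)ᴴ * (∑ l, ((M l).map Complex.ofReal) * (Matrix.of fun a b => ∫ x in (-ω)..ω, ((resolvMat (A.map Complex.ofReal) x) * (B.map Complex.ofReal) * (Bk.map Complex.ofReal)ᵀ * (resolvMat (Ak.map Complex.ofReal) x)ᴴ) a b : Matrix (Fin n) (Fin k) ℂ) * ((Mk l).map Complex.ofReal)) * (resolvMat (Ak.map Complex.ofReal) y)) * (Bk.map Complex.ofReal)) i j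
        = ∫ x in (-ω)..ω, (((B.map Complex.ofReal)ᵀ * (resolvMat (A.map Complex.ofReal) y)ᴴ) * (∑ l, ((M l).map Complex.ofReal) * ((resolvMat (A.map Complex.ofReal) x) * (B.map Complex.ofReal) * (Bk.map Complex.ofReal)ᵀ * (resolvMat (Ak.map Complex.ofReal) x)ᴴ) * ((Mk l).map Complex.ofReal)) * ((resolvMat (Ak.map Complex.ofReal) y) * (Bk.map Complex.ofReal))) i j := by
      rw [show (B.map Complex.ofReal)ᵀ * ((resolvMat (A.map Complex.ofReal) y)ᴴ * (∑ l, ((M l).map Complex.ofReal) * (Matrix.of fun a b => ∫ x in (-ω)..ω, ((resolvMat (A.map Complex.ofReal) x) * (B.map Complex.ofReal) * (Bk.map Complex.ofReal)ᵀ * (resolvMat (Ak.map Complex.ofReal) x)ᴴ) a b : Matrix (Fin n) (Fin k) ℂ) * ((Mk l).map Complex.ofReal)) * (resolvMat (Ak.map Complex.ofReal) y)) * (Bk.map Complex.ofReal)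
          = ((B.map Complex.ofReal)ᵀ * (resolvMat (A.map Complex.ofReal) y)ᴴ) * (∑ l, ((M l).map Complex.ofReal) * (Matrix.of fun a b => ∫ x in (-ω)..ω, ((resolvMat (A.map Complex.ofReal) x) * (B.map Complex.ofReal) * (Bk.map Complex.ofReal)ᵀ * (resolvMat (Ak.map Complex.ofReal) x)ᴴ) a b : Matrix (Fin n) (Fin k) ℂ) * ((Mk l).map Complex.ofReal)) * ((resolvMat (Ak.map Complex.ofReal) y) * (Bk.map Complex.ofReal)) by
        simp only [Matrix.mul_assoc]]
      rw [hS, ← integral_matrix_mul_const hfSig _ _ i j]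
    rw [e3]
    refine intervalIntegral.integral_congr fun x _ => ?_
    exact congrFun (congrFun (hF x y) i) j
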